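/- Let (Ω, μ) be a measure space and let m, n ∈ 𝕊 with m · n = - n · m. The map Φ on L²(Ω; ℍ; μ) defined by (Φ f)(x) = f(x) · n is a surjective ℝ-linear isometry with Φ ∘ Φ = -id, and Φ maps the subspace of functions taking values in ℂ_m μ-almost everywhere bijectively onto the subspace {f ∈ L²(Ω; ℍ; μ) : m · f(x) = - f(x) · m for μ-almost every x}. -/

import Mathlib

/-!
Pointwise, `q ↦ q * n` preserves norms and squares to `-1`, so it induces a surjective isometry
of `L²` with `Φ² = -id`. Since `n` anticommutes with `m`, it exchanges the commutant of `m` with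
its anticommutant, and the commutant of an imaginary unit `m` is exactly the slice `ℂ_m`.
-/

open Quaternion MeasureTheory ENNReal

noncomputable section

/-- `q` belongs to the imaginary unit sphere `𝕊`. -/
def inS (q : ℍ[ℝ]) : Prop := star q = -q ∧ ‖q‖ = 1

/-- The slice `ℂ_m = {α + mβ : α, β ∈ ℝ}`. -/
def quatSlice (m : ℍ[ℝ]) : Set ℍ[ℝ] := {q | ∃ α β : ℝ, q = (α : ℍ[ℝ]) + m * (β : ℍ[ℝ])}

section Anticommute

variable {R : Type*} [Ring R] {a b n : R}

theorem Commute.mul_right_anticomm (hb : Commute a b) (hn : a * n = -(n * a)) :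
    a * (b * n) = -(b * n * a) := by
  rw [← mul_assoc, hb.eq, mul_assoc, hn, mul_neg, mul_assoc]

theorem commute_mul_right_of_anticomm (hb : a * b = -(b * a)) (hn : a * n = -(n * a)) :
    Commute a (b * n) := by
  rw [Commute, SemiconjBy, ← mul_assoc, hb, neg_mul, mul_assoc, hn, mul_neg, neg_neg, mul_assoc]

end Anticommute

theorem inS.mul_self_eq_neg_one {m : ℍ[ℝ]} (hm : inS m) : m * m = -1 := by
  have h := Quaternion.star_mul_self m
  rw [hm.1, Quaternion.normSq_eq_norm_mul_self, hm.2, neg_mul] at h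
  simpa [neg_eq_iff_eq_neg] using h

theorem commute_of_mem_quatSlice {m q : ℍ[ℝ]} (hq : q ∈ quatSlice m) : Commute m q := by
  obtain ⟨α, β, rfl⟩ := hq
  exact (Quaternion.coe_commute α m).symm.add_right
    ((Commute.refl m).mul_right (Quaternion.coe_commute β m).symm)

/-- The imaginary part `u` of `p` commutes with `m`, so `m * u` is self-adjoint, hence real,
and `u = -m * (m * u)` is a real multiple of `m`. -/
theorem mem_quatSlice_of_commute {m p : ℍ[ℝ]} (hm_star : star m = -m) (hm_sq : m * m = -1)
    (hp : Commute m p) : p ∈ quatSlice m := by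
  have him : Commute m p.im := by
    rw [eq_sub_of_add_eq' (Quaternion.re_add_im p)]
    exact hp.sub_right (Quaternion.coe_commute p.re m).symm
  have hreal : m * p.im = ((m * p.im).re : ℍ[ℝ]) := by
    rw [← Quaternion.star_eq_self, star_mul, Quaternion.star_im, hm_star, neg_mul_neg, him.eq]
  refine ⟨p.re, -(m * p.im).re, ?_⟩
  calc p = p.re + p.im := (Quaternion.re_add_im p).symm
    _ = p.re + -(m * (m * p.im)) := by rw [← mul_assoc, hm_sq, neg_one_mul, neg_neg]
    _ = p.re + m * ((-(m * p.im).re : ℝ) : ℍ[ℝ]) := by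
      rw [Quaternion.coe_neg, mul_neg, ← hreal]

namespace MeasureTheory.Lp

variable {𝕜 A α : Type*} [NontriviallyNormedField 𝕜] [NormedRing A] [NormedAlgebra 𝕜 A]
  [MeasurableSpace α] {p : ℝ≥0∞} [Fact (1 ≤ p)] {μ : Measure α}

variable (𝕜 p μ) in
def mulRight (n : A) : Lp A p μ →L[𝕜] Lp A p μ :=
  ((ContinuousLinearMap.mul 𝕜 A).flip n).compLpL p μ

theorem coeFn_mulRight (n : A) (f : Lp A p μ) :
    ∀ᵐ x ∂μ, mulRight 𝕜 p μ n f x = f x * n :=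
  ((ContinuousLinearMap.mul 𝕜 A).flip n).coeFn_compLp f

theorem mulRight_mulRight_of_mul_self_eq_neg_one {n : A} (hn : n * n = -1) (f : Lp A p μ) :
    mulRight 𝕜 p μ n (mulRight 𝕜 p μ n f) = -f := by
  refine Lp.ext ?_
  filter_upwards [coeFn_mulRight (𝕜 := 𝕜) n (mulRight 𝕜 p μ n f),
    coeFn_mulRight (𝕜 := 𝕜) n f, Lp.coeFn_neg f] with x h₁ h₂ h₃
  rw [h₁, h₂, h₃, mul_assoc, hn, Pi.neg_apply, mul_neg_one]

theorem norm_mulRight {n : A} (hn : ∀ a : A, ‖a * n‖ = ‖a‖) (f : Lp A p μ) :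
    ‖mulRight 𝕜 p μ n f‖ = ‖f‖ := by
  rw [Lp.norm_def, Lp.norm_def, eLpNorm_congr_norm_ae (g := f)]
  filter_upwards [coeFn_mulRight (𝕜 := 𝕜) n f] with x hx
  rw [hx, hn]

theorem image_mulRight_setOf_ae {n : A} (hn : n * n = -1) {P Q : A → Prop}
    (hPQ : ∀ a, P a → Q (a * n)) (hQP : ∀ a, Q a → P (-(a * n))) :
    mulRight 𝕜 p μ n '' {f | ∀ᵐ x ∂μ, P (f x)} = {f | ∀ᵐ x ∂μ, Q (f x)} := by
  ext g
  simp only [Set.mem_image, Set.mem_ofPred_eq]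
  constructor
  · rintro ⟨f, hf, rfl⟩
    filter_upwards [coeFn_mulRight (𝕜 := 𝕜) n f, hf] with x hx hfx
    exact hx ▸ hPQ _ hfx
  · intro hg
    refine ⟨-mulRight 𝕜 p μ n g, ?_, ?_⟩
    · filter_upwards [Lp.coeFn_neg (mulRight 𝕜 p μ n g), coeFn_mulRight (𝕜 := 𝕜) n g, hg]
        with x h₁ h₂ hgx
      rw [h₁, Pi.neg_apply, h₂]
      exact hQP _ hgx
    · rw [map_neg, mulRight_mulRight_of_mul_self_eq_neg_one hn, neg_neg]

end MeasureTheory.Lp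

/-- Right multiplication by `n` on `L²(Ω; ℍ; μ)` is a surjective ℝ-linear isometry
`Φ` with `Φ² = -id` mapping the a.e. `ℂ_m`-valued functions bijectively onto the
functions anticommuting with `m` a.e. -/
theorem right_mult_maps_slice_to_anticommutant {Ω : Type*} [MeasurableSpace Ω]
    (μ : Measure Ω) (m n : ℍ[ℝ]) (hm : inS m) (hn : inS n)
    (hanti : m * n = -(n * m)) :
    ∃ Φ : Lp ℍ[ℝ] 2 μ → Lp ℍ[ℝ] 2 μ,
      (∀ f : Lp ℍ[ℝ] 2 μ, ∀ᵐ x ∂μ, (Φ f) x = f x * n) ∧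
      (∀ (c : ℝ) (f g : Lp ℍ[ℝ] 2 μ), Φ (c • f + g) = c • Φ f + Φ g) ∧
      (∀ f : Lp ℍ[ℝ] 2 μ, ‖Φ f‖ = ‖f‖) ∧
      Function.Surjective Φ ∧
      (∀ f : Lp ℍ[ℝ] 2 μ, Φ (Φ f) = -f) ∧
      Φ '' {f : Lp ℍ[ℝ] 2 μ | ∀ᵐ x ∂μ, f x ∈ quatSlice m} =
        {f : Lp ℍ[ℝ] 2 μ | ∀ᵐ x ∂μ, m * f x = -(f x * m)} ∧
      Set.InjOn Φ {f : Lp ℍ[ℝ] 2 μ | ∀ᵐ x ∂μ, f x ∈ quatSlice m} := by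
  have hn_sq := hn.mul_self_eq_neg_one
  set Φ := Lp.mulRight ℝ 2 μ n
  have hΦΦ : ∀ f, Φ (Φ f) = -f := Lp.mulRight_mulRight_of_mul_self_eq_neg_one hn_sq
  have hΦ_norm : ∀ f, ‖Φ f‖ = ‖f‖ :=
    Lp.norm_mulRight fun a => by rw [norm_mul, hn.2, mul_one]
  refine ⟨Φ, Lp.coeFn_mulRight n, fun c f g => by rw [map_add, map_smul], hΦ_norm,
    fun g => ⟨-Φ g, by rw [map_neg, hΦΦ, neg_neg]⟩, hΦΦ, ?_, ?_⟩
  · exact Lp.image_mulRight_setOf_ae (P := (· ∈ quatSlice m)) (Q := fun q => m * q = -(q * m))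
      hn_sq
      (fun q hq => (commute_of_mem_quatSlice hq).mul_right_anticomm hanti)
      (fun q hq => mem_quatSlice_of_commute hm.1 hm.mul_self_eq_neg_one
        (commute_mul_right_of_anticomm hq hanti).neg_right)
  · exact (AddMonoidHomClass.isometry_of_norm Φ hΦ_norm).injective.injOn
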